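/- Let 𝕄⁸ ⊂ M₇ₓ₇(ℝ) be the 8-dimensional image of the linear map ι: ℝ⁸ → M₇ₓ₇(ℝ), ι(x) = [[0₃ₓ₃, α(x)], [−α(x)ᵗ, 0₄ₓ₄]], where α(x) has rows (−x³ + √3·x⁴, −x⁵ + √3·x⁶, −x⁷ + √3·x⁸, −2x¹), (−x¹ − √3·x², x⁷ + √3·x⁸, −x⁵ − √3·x⁶, 2x³), (−2x⁷, x¹ − √3·x², −x³ − √3·x⁴, −2x⁵). Let s₁, s₂, s₃ be the 7×7 matrices which vanish outside the lower-right 4×4 block, with 4×4 blocks (1/2)·[[0,1,0,0],[−1,0,0,0],[0,0,0,−1],[0,0,1,0]], (1/2)·[[0,0,1,0],[0,0,0,1],[−1,0,0,0],[0,−1,0,0]], (1/2)·[[0,0,0,1],[0,0,−1,0],[0,1,0,0],[−1,0,0,0]] respectively, and let σ₁, σ₂, σ₃ be the 7×7 matrices σ₁ = [[0,−1,0],[1,0,0],[0,0,0]] ⊕ (1/2)·[[0,0,0,−1],[0,0,−1,0],[0,1,0,0],[1,0,0,0]], σ₂ = [[0,0,1],[0,0,0],[−1,0,0]] ⊕ (1/2)·[[0,0,1,0],[0,0,0,−1],[−1,0,0,0],[0,1,0,0]],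 σ₃ = [[0,0,0],[0,0,1],[0,−1,0]] ⊕ (1/2)·[[0,−1,0,0],[1,0,0,0],[0,0,0,−1],[0,0,1,0]] (direct sum of a 3×3 upper-left block and a 4×4 lower-right block). Then for every m ∈ {s₁,s₂,s₃,σ₁,σ₂,σ₃} and every x ∈ ℝ⁸, the commutator [m, ι(x)] = m·ι(x) − ι(x)·m belongs to 𝕄⁸, i.e. there exists y ∈ ℝ⁸ with [m, ι(x)] = ι(y). -/

import Mathlib

open Matrix Polynomial

/-- The linear embedding `ι : ℝ⁸ → M₇ₓ₇(ℝ)` onto the space `𝕄⁸` of antisymmetric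
7×7 matrices defining the `SU(2)×SU(2)` structure in dimension 8. -/
noncomputable def iota8 (x : Fin 8 → ℝ) : Matrix (Fin 7) (Fin 7) ℝ :=
  !![0, 0, 0, -x 2 + Real.sqrt 3 * x 3, -x 4 + Real.sqrt 3 * x 5,
       -x 6 + Real.sqrt 3 * x 7, -2 * x 0;
     0, 0, 0, -x 0 - Real.sqrt 3 * x 1, x 6 + Real.sqrt 3 * x 7,
       -x 4 - Real.sqrt 3 * x 5, 2 * x 2;
     0, 0, 0, -2 * x 6, x 0 - Real.sqrt 3 * x 1, -x 2 - Real.sqrt 3 * x 3, -2 * x 4;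
     x 2 - Real.sqrt 3 * x 3, x 0 + Real.sqrt 3 * x 1, 2 * x 6, 0, 0, 0, 0;
     x 4 - Real.sqrt 3 * x 5, -x 6 - Real.sqrt 3 * x 7, -x 0 + Real.sqrt 3 * x 1,
       0, 0, 0, 0;
     x 6 - Real.sqrt 3 * x 7, x 4 + Real.sqrt 3 * x 5, x 2 + Real.sqrt 3 * x 3,
       0, 0, 0, 0;
     2 * x 0, -2 * x 2, 2 * x 4, 0, 0, 0, 0]

/-- Generator `s₁` of the first `su(2)` (lower-right 4×4 block). -/
noncomputable def s1 : Matrix (Fin 7) (Fin 7) ℝ :=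
  !![0, 0, 0, 0, 0, 0, 0;
     0, 0, 0, 0, 0, 0, 0;
     0, 0, 0, 0, 0, 0, 0;
     0, 0, 0, 0, 1/2, 0, 0;
     0, 0, 0, -(1/2), 0, 0, 0;
     0, 0, 0, 0, 0, 0, -(1/2);
     0, 0, 0, 0, 0, 1/2, 0]

/-- Generator `s₂` of the first `su(2)` (lower-right 4×4 block). -/
noncomputable def s2 : Matrix (Fin 7) (Fin 7) ℝ :=
  !![0, 0, 0, 0, 0, 0, 0;
     0, 0, 0, 0, 0, 0, 0;
     0, 0, 0, 0, 0, 0, 0;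
     0, 0, 0, 0, 0, 1/2, 0;
     0, 0, 0, 0, 0, 0, 1/2;
     0, 0, 0, -(1/2), 0, 0, 0;
     0, 0, 0, 0, -(1/2), 0, 0]

/-- Generator `s₃` of the first `su(2)` (lower-right 4×4 block). -/
noncomputable def s3 : Matrix (Fin 7) (Fin 7) ℝ :=
  !![0, 0, 0, 0, 0, 0, 0;
     0, 0, 0, 0, 0, 0, 0;
     0, 0, 0, 0, 0, 0, 0;
     0, 0, 0, 0, 0, 0, 1/2;
     0, 0, 0, 0, 0, -(1/2), 0;
     0, 0, 0, 0, 1/2, 0, 0;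
     0, 0, 0, -(1/2), 0, 0, 0]

/-- Generator `σ₁` of the second `su(2)` (3×3 ⊕ 4×4 block form). -/
noncomputable def t1 : Matrix (Fin 7) (Fin 7) ℝ :=
  !![0, -1, 0, 0, 0, 0, 0;
     1, 0, 0, 0, 0, 0, 0;
     0, 0, 0, 0, 0, 0, 0;
     0, 0, 0, 0, 0, 0, -(1/2);
     0, 0, 0, 0, 0, -(1/2), 0;
     0, 0, 0, 0, 1/2, 0, 0;
     0, 0, 0, 1/2, 0, 0, 0]

/-- Generator `σ₂` of the second `su(2)` (3×3 ⊕ 4×4 block form). -/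
noncomputable def t2 : Matrix (Fin 7) (Fin 7) ℝ :=
  !![0, 0, 1, 0, 0, 0, 0;
     0, 0, 0, 0, 0, 0, 0;
     -1, 0, 0, 0, 0, 0, 0;
     0, 0, 0, 0, 0, 1/2, 0;
     0, 0, 0, 0, 0, 0, -(1/2);
     0, 0, 0, -(1/2), 0, 0, 0;
     0, 0, 0, 0, 1/2, 0, 0]

/-- Generator `σ₃` of the second `su(2)` (3×3 ⊕ 4×4 block form). -/
noncomputable def t3 : Matrix (Fin 7) (Fin 7) ℝ :=
  !![0, 0, 0, 0, 0, 0, 0;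
     0, 0, 1, 0, 0, 0, 0;
     0, -1, 0, 0, 0, 0, 0;
     0, 0, 0, 0, -(1/2), 0, 0;
     0, 0, 0, 1/2, 0, 0, 0;
     0, 0, 0, 0, 0, 0, -(1/2);
     0, 0, 0, 0, 0, 1/2, 0]

/-! The commutator of a generator `m` with `ι x` is `ι (dρ(m) x)` for an explicit linear map
`dρ(m)` of `ℝ⁸`, the image of `m` under the derivative `dρ` of `ρ`. Finding it amounts to
solving a linear system; checking it is an entrywise computation in which the only relation
beyond ring arithmetic is `√3 * √3 = 3`. -/

theorem lie_s1_iota8 (x : Fin 8 → ℝ) :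
    ⁅s1, iota8 x⁆ =
      iota8 ![(x 6 - √3 * x 7) / 4, (-√3 * x 6 - x 7) / 4,
        (-x 4 - √3 * x 5) / 4, (-√3 * x 4 + x 5) / 4,
        (x 2 + √3 * x 3) / 4, (√3 * x 2 - x 3) / 4,
        (-x 0 + √3 * x 1) / 4, (√3 * x 0 + x 1) / 4] := by
  simp [Ring.lie_def, iota8, s1, Matrix.cons_zero_zero, ← Matrix.zero_empty]
  and_intros <;> grind

theorem lie_s2_iota8 (x : Fin 8 → ℝ) :
    ⁅s2, iota8 x⁆ =
      iota8 ![(-x 4 + √3 * x 5) / 4, (√3 * x 4 + x 5) / 4,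
        (-x 6 - √3 * x 7) / 4, (-√3 * x 6 + x 7) / 4,
        (x 0 - √3 * x 1) / 4, (-√3 * x 0 - x 1) / 4,
        (x 2 + √3 * x 3) / 4, (√3 * x 2 - x 3) / 4] := by
  simp [Ring.lie_def, iota8, s2, Matrix.cons_zero_zero, ← Matrix.zero_empty]
  and_intros <;> grind

theorem lie_s3_iota8 (x : Fin 8 → ℝ) :
    ⁅s3, iota8 x⁆ =
      iota8 ![(-x 2 + √3 * x 3) / 4, (-√3 * x 2 - x 3) / 4,
        (x 0 + √3 * x 1) / 4, (-√3 * x 0 + x 1) / 4,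
        -x 6 / 2, -x 7 / 2,
        x 4 / 2, x 5 / 2] := by
  simp [Ring.lie_def, iota8, s3, Matrix.cons_zero_zero, ← Matrix.zero_empty]
  and_intros <;> grind

theorem lie_t1_iota8 (x : Fin 8 → ℝ) :
    ⁅t1, iota8 x⁆ =
      iota8 ![(5 * x 2 - √3 * x 3) / 4, (√3 * x 2 - 3 * x 3) / 4,
        (-5 * x 0 - √3 * x 1) / 4, (√3 * x 0 + 3 * x 1) / 4,
        x 6 / 2, -3 * x 7 / 2,
        -x 4 / 2, 3 * x 5 / 2] := by
  simp [Ring.lie_def, iota8, t1, Matrix.cons_zero_zero, ← Matrix.zero_empty]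
  and_intros <;> grind

theorem lie_t2_iota8 (x : Fin 8 → ℝ) :
    ⁅t2, iota8 x⁆ =
      iota8 ![(5 * x 4 - √3 * x 5) / 4, (-√3 * x 4 + 3 * x 5) / 4,
        (x 6 + √3 * x 7) / 4, (-3 * √3 * x 6 + 3 * x 7) / 4,
        (-5 * x 0 + √3 * x 1) / 4, (√3 * x 0 - 3 * x 1) / 4,
        (-x 2 + 3 * √3 * x 3) / 4, (-√3 * x 2 - 3 * x 3) / 4] := by
  simp [Ring.lie_def, iota8, t2, Matrix.cons_zero_zero, ← Matrix.zero_empty]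
  and_intros <;> grind

theorem lie_t3_iota8 (x : Fin 8 → ℝ) :
    ⁅t3, iota8 x⁆ =
      iota8 ![(x 6 - √3 * x 7) / 4, (3 * √3 * x 6 + 3 * x 7) / 4,
        (-5 * x 4 - √3 * x 5) / 4, (-√3 * x 4 - 3 * x 5) / 4,
        (5 * x 2 + √3 * x 3) / 4, (√3 * x 2 + 3 * x 3) / 4,
        (-x 0 - 3 * √3 * x 1) / 4, (√3 * x 0 - 3 * x 1) / 4] := by
  simp [Ring.lie_def, iota8, t3, Matrix.cons_zero_zero, ← Matrix.zero_empty]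
  and_intros <;> grind

/-- For each generator `m` of the `su(2)⊕su(2)` algebra and each `x ∈ ℝ⁸`, the
commutator `[m, ι(x)]` again lies in the 8-dimensional space `𝕄⁸ = ι(ℝ⁸)`. -/
theorem statement18 (m : Matrix (Fin 7) (Fin 7) ℝ)
    (hm : m = s1 ∨ m = s2 ∨ m = s3 ∨ m = t1 ∨ m = t2 ∨ m = t3) (x : Fin 8 → ℝ) :
    ∃ y : Fin 8 → ℝ, m * iota8 x - iota8 x * m = iota8 y := by
  rw [← Ring.lie_def]
  rcases hm with rfl | rfl | rfl | rfl | rfl | rfl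
  exacts [⟨_, lie_s1_iota8 x⟩, ⟨_, lie_s2_iota8 x⟩, ⟨_, lie_s3_iota8 x⟩,
    ⟨_, lie_t1_iota8 x⟩, ⟨_, lie_t2_iota8 x⟩, ⟨_, lie_t3_iota8 x⟩]
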